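/- (Receptive field of a K-layer GNN.) Let G be a simple graph on Fin N. For l = 1,…,K let W_l be a real N×N matrix supported on G with self-loops (i.e., W_l i j ≠ 0 implies i = j or G.Adj i j), let Θ_l be a real d_{l-1}×d_l matrix, and σ_l : ℝ → ℝ. Define the K-layer GNN output of an input feature matrix H ∈ Matrix (Fin N) (Fin d_0) ℝ recursively by H^{(0)} = H and H^{(l)} = σ_l applied entrywise to W_l·H^{(l-1)}·Θ_l. Fix a vertex v. If two inputs H, H' agree on the rows of every vertex u with G.Reachable v u and G.dist v u ≤ K, then the K-layer outputs agree in row v: H^{(K)} v = H'^{(K)} v. In other words, after K layers of graph convolution, the representation of every node is determined by the information from the nodes within K hops. -/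
import Mathlib


/-- The output of a `K`-layer GNN, with layer `l+1` using propagation matrix `W l`,
weight matrix `Θ l : Matrix (Fin (d l)) (Fin (d (l+1))) ℝ`, and entrywise
activation `σ l`. -/
noncomputable def gnnOutput {N : ℕ} (d : ℕ → ℕ)
    (W : ℕ → Matrix (Fin N) (Fin N) ℝ)
    (Θ : (l : ℕ) → Matrix (Fin (d l)) (Fin (d (l + 1))) ℝ)
    (σ : ℕ → ℝ → ℝ) (H : Matrix (Fin N) (Fin (d 0)) ℝ) :
    (K : ℕ) → Matrix (Fin N) (Fin (d K)) ℝ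
  | 0 => H
  | K + 1 => Matrix.of fun i c =>
      σ K ((W K * gnnOutput d W Θ σ H K * Θ K) i c)

/-- Receptive field of a `K`-layer GNN: if each propagation matrix is supported on
the graph `G` with self-loops, and two inputs agree on all rows of vertices within
`K` hops of `v`, then the `K`-layer outputs agree in row `v`. -/
theorem gnn_receptive_field {N : ℕ} (G : SimpleGraph (Fin N)) (K : ℕ)
    (d : ℕ → ℕ) (W : ℕ → Matrix (Fin N) (Fin N) ℝ)
    (hW : ∀ l i j, W l i j ≠ 0 → i = j ∨ G.Adj i j)
    (Θ : (l : ℕ) → Matrix (Fin (d l)) (Fin (d (l + 1))) ℝ)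
    (σ : ℕ → ℝ → ℝ) (v : Fin N)
    (H H' : Matrix (Fin N) (Fin (d 0)) ℝ)
    (hagree : ∀ u, G.Reachable v u → G.dist v u ≤ K → H u = H' u) :
    gnnOutput d W Θ σ H K v = gnnOutput d W Θ σ H' K v := by
  induction K generalizing v with
  | zero =>
    exact hagree v (SimpleGraph.Reachable.refl v) (by simp)
  | succ K ih =>
    funext c
    show σ K _ = σ K _
    congr 1
    rw [Matrix.mul_apply, Matrix.mul_apply]
    refine Finset.sum_congr rfl fun k _ => ?_
    congr 1
    rw [Matrix.mul_apply, Matrix.mul_apply]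
    refine Finset.sum_congr rfl fun j _ => ?_
    by_cases h0 : W K v j = 0
    · simp [h0]
    · have hrow : gnnOutput d W Θ σ H K j = gnnOutput d W Θ σ H' K j := by
        refine ih j fun u hru hdu => ?_
        rcases hW K v j h0 with rfl | hadj
        · exact hagree u hru (hdu.trans (Nat.le_succ K))
        · have hvj : G.dist v j ≤ 1 := by
            rw [SimpleGraph.dist_eq_one_iff_adj.mpr hadj]
          refine hagree u (hadj.reachable.trans hru) ?_
          obtain ⟨p, hp⟩ := hru.exists_walk_length_eq_dist
          have := SimpleGraph.dist_le (SimpleGraph.Walk.cons hadj p)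
          simp only [SimpleGraph.Walk.length_cons, hp] at this
          omega
      rw [hrow]
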